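/- For the vector X of the previous construction (X_1 = min(V_1,V_2), X_2 = min(V_2,V_3), X_3 = min(V_3,V_4) with V_i i.i.d. unit Pareto) and the partition I_1 = {1,2}, I_2 = {3}: the fragility index FI(X,𝒟) = lim_{x→∞} [P(X_1>x or X_2>x) + P(X_3>x)] / P(X_1>x or X_2>x or X_3>x) = 1, while the coefficient η(X,𝒟) = (1/2) lim_{x→∞} [log P(X_1>x,X_2>x) + log P(X_3>x)] / log P(X_1>x,X_2>x,X_3>x) = 5/8 and η_{(I_1,I_2)} = (1/2) lim_{x→∞} [log P(X_{I_1} ⊀ x) + log P(X_3>x)] / log P(X_{I_1} ⊀ x, X_3>x) = 2/3; in particular the two asymptotic-independence coefficients differ. -/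

import Mathlib

/-!
Put `p = x⁻¹`. By independence, the probability that `V i > x` for all `i ∈ S` is `p ^ #S`, and
every event in the statement is a union or intersection of such joint exceedances of consecutive
pairs, so by inclusion–exclusion each probability is a polynomial in `p`:
`2p² - p³`, `p²`, `3p² - 2p³`, `p³`, `p⁴` and `p³`. The fragility ratio is then
`(3 - p) / (3 - 2p) → 1`, while each log-probability is `log p` times the lowest exponent of its
polynomial plus `O(1)`, so the two η-ratios tend to `(3 + 2) / (2 · 4) = 5/8` and
`(2 + 2) / (2 · 3) = 2/3`.
-/

open MeasureTheory ProbabilityTheory Filter Topology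

section JointExceedance

variable {Ω ι : Type*} {V : ι → Ω → ℝ} {x p : ℝ}

def jointExceedance (V : ι → Ω → ℝ) (S : Finset ι) (x : ℝ) : Set Ω :=
  {ω | ∀ i ∈ S, x < V i ω}

@[simp]
lemma mem_jointExceedance {S : Finset ι} {ω : Ω} :
    ω ∈ jointExceedance V S x ↔ ∀ i ∈ S, x < V i ω :=
  Iff.rfl

lemma jointExceedance_eq_biInter (S : Finset ι) :
    jointExceedance V S x = ⋂ i ∈ S, {ω | x < V i ω} := by
  ext ω
  simp

lemma measurableSet_jointExceedance [MeasurableSpace Ω] (hmeas : ∀ i, Measurable (V i))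
    (S : Finset ι) :
    MeasurableSet (jointExceedance V S x) := by
  rw [jointExceedance_eq_biInter]
  exact Finset.measurableSet_biInter S fun i _ => measurableSet_lt measurable_const (hmeas i)

lemma jointExceedance_inter [DecidableEq ι] (S T : Finset ι) :
    jointExceedance V S x ∩ jointExceedance V T x = jointExceedance V (S ∪ T) x := by
  ext ω
  simp [or_imp, forall_and]

lemma measureReal_jointExceedance [MeasurableSpace Ω] {μ : Measure Ω} (hindep : iIndepFun V μ)
    (hsurv : ∀ i, μ.real {ω | x < V i ω} = p) (S : Finset ι) :
    μ.real (jointExceedance V S x) = p ^ S.card := by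
  rw [jointExceedance_eq_biInter, measureReal_def,
    hindep.meas_biInter (s := fun i => {ω | x < V i ω})
      fun i _ => ⟨Set.Ioi x, measurableSet_Ioi, rfl⟩,
    ENNReal.toReal_prod]
  simp [← measureReal_def, hsurv]

lemma measureReal_jointExceedance_union [MeasurableSpace Ω] {μ : Measure Ω} [IsFiniteMeasure μ]
    [DecidableEq ι] (hmeas : ∀ i, Measurable (V i)) (hindep : iIndepFun V μ)
    (hsurv : ∀ i, μ.real {ω | x < V i ω} = p) (S T : Finset ι) :
    μ.real (jointExceedance V S x ∪ jointExceedance V T x) =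
      p ^ S.card + p ^ T.card - p ^ (S ∪ T).card := by
  have h := measureReal_union_add_inter (μ := μ) (s := jointExceedance V S x)
    (measurableSet_jointExceedance hmeas T)
  simp only [jointExceedance_inter, measureReal_jointExceedance hindep hsurv] at h
  linarith

lemma measureReal_lt_min [MeasurableSpace Ω] {μ : Measure Ω} (hindep : iIndepFun V μ)
    (hsurv : ∀ i, μ.real {ω | x < V i ω} = p) {i j : ι} (hij : i ≠ j) :
    μ.real {ω | x < min (V i ω) (V j ω)} = p ^ 2 := by
  classical
  have h := measureReal_jointExceedance hindep hsurv {i, j}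
  rw [Finset.card_pair hij] at h
  convert h using 2
  ext ω
  simp

end JointExceedance

section MinChain

variable {Ω : Type*} [MeasurableSpace Ω] {μ : Measure Ω} {V : Fin 4 → Ω → ℝ} {x p : ℝ}

lemma measureReal_chain_or_and (hindep : iIndepFun V μ)
    (hsurv : ∀ i, μ.real {ω | x < V i ω} = p) :
    μ.real {ω | (x < min (V 0 ω) (V 1 ω) ∨ x < min (V 1 ω) (V 2 ω)) ∧
      x < min (V 2 ω) (V 3 ω)} = p ^ 3 := by
  have h : {ω | (x < min (V 0 ω) (V 1 ω) ∨ x < min (V 1 ω) (V 2 ω)) ∧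
      x < min (V 2 ω) (V 3 ω)} = jointExceedance V {1, 2, 3} x := by
    ext ω
    simp
    tauto
  rw [h, measureReal_jointExceedance hindep hsurv]
  rfl

lemma measureReal_chain_and (hindep : iIndepFun V μ)
    (hsurv : ∀ i, μ.real {ω | x < V i ω} = p) :
    μ.real {ω | x < min (V 0 ω) (V 1 ω) ∧ x < min (V 1 ω) (V 2 ω)} = p ^ 3 := by
  have h : {ω | x < min (V 0 ω) (V 1 ω) ∧ x < min (V 1 ω) (V 2 ω)} =
      jointExceedance V {0, 1, 2} x := by
    ext ω
    simp
    tauto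
  rw [h, measureReal_jointExceedance hindep hsurv]
  rfl

lemma measureReal_chain_and_and (hindep : iIndepFun V μ)
    (hsurv : ∀ i, μ.real {ω | x < V i ω} = p) :
    μ.real {ω | x < min (V 0 ω) (V 1 ω) ∧ x < min (V 1 ω) (V 2 ω) ∧
      x < min (V 2 ω) (V 3 ω)} = p ^ 4 := by
  have h : {ω | x < min (V 0 ω) (V 1 ω) ∧ x < min (V 1 ω) (V 2 ω) ∧
      x < min (V 2 ω) (V 3 ω)} = jointExceedance V {0, 1, 2, 3} x := by
    ext ω
    simp
    tauto
  rw [h, measureReal_jointExceedance hindep hsurv]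
  rfl

lemma measureReal_chain_or [IsFiniteMeasure μ] (hmeas : ∀ i, Measurable (V i))
    (hindep : iIndepFun V μ) (hsurv : ∀ i, μ.real {ω | x < V i ω} = p) :
    μ.real {ω | x < min (V 0 ω) (V 1 ω) ∨ x < min (V 1 ω) (V 2 ω)} = 2 * p ^ 2 - p ^ 3 := by
  have h : {ω | x < min (V 0 ω) (V 1 ω) ∨ x < min (V 1 ω) (V 2 ω)} =
      jointExceedance V {0, 1} x ∪ jointExceedance V {1, 2} x := by
    ext ω
    simp
  rw [h, measureReal_jointExceedance_union hmeas hindep hsurv]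
  show p ^ 2 + p ^ 2 - p ^ 3 = _
  ring

lemma measureReal_chain_or_or [IsFiniteMeasure μ] (hmeas : ∀ i, Measurable (V i))
    (hindep : iIndepFun V μ) (hsurv : ∀ i, μ.real {ω | x < V i ω} = p) :
    μ.real {ω | x < min (V 0 ω) (V 1 ω) ∨ x < min (V 1 ω) (V 2 ω) ∨
      x < min (V 2 ω) (V 3 ω)} = 3 * p ^ 2 - 2 * p ^ 3 := by
  have hC : MeasurableSet {ω | x < min (V 2 ω) (V 3 ω)} :=
    measurableSet_lt measurable_const ((hmeas 2).min (hmeas 3))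
  have hU : {ω | x < min (V 0 ω) (V 1 ω) ∨ x < min (V 1 ω) (V 2 ω) ∨
      x < min (V 2 ω) (V 3 ω)} = {ω | x < min (V 0 ω) (V 1 ω) ∨ x < min (V 1 ω) (V 2 ω)} ∪
      {ω | x < min (V 2 ω) (V 3 ω)} := by
    ext ω
    simp [or_assoc]
  have h := measureReal_union_add_inter (μ := μ)
    (s := {ω | x < min (V 0 ω) (V 1 ω) ∨ x < min (V 1 ω) (V 2 ω)}) hC
  rw [← hU, ← Set.ofPred_and] at h
  rw [measureReal_chain_or_and hindep hsurv, measureReal_chain_or hmeas hindep hsurv,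
    measureReal_lt_min hindep hsurv (by decide)] at h
  linarith

end MinChain

section TailRatios

open Real

lemma tendsto_log_div_log_of_eq_pow_mul {f g : ℝ → ℝ} {L : ℝ} (n : ℕ) (hL : 0 < L)
    (hg : Tendsto g (𝓝[>] 0) (𝓝 L)) (hf : ∀ᶠ p in 𝓝[>] 0, f p = p ^ n * g p) :
    Tendsto (fun p => log (f p) / log p) (𝓝[>] 0) (𝓝 n) := by
  have hlim : Tendsto (fun p => n + log (g p) / log p) (𝓝[>] 0) (𝓝 (n + 0)) :=
    tendsto_const_nhds.add ((hg.log hL.ne').div_atBot tendsto_log_nhdsGT_zero)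
  rw [add_zero] at hlim
  refine hlim.congr' ?_
  filter_upwards [hf, hg.eventually (eventually_gt_nhds hL), Ioo_mem_nhdsGT one_pos]
    with p hfp hgp hp
  rw [hfp, log_mul (pow_pos hp.1 n).ne' hgp.ne', log_pow, add_div,
    mul_div_cancel_right₀ _ (log_neg hp.1 hp.2).ne]

lemma tendsto_log_pow_div_log (n : ℕ) :
    Tendsto (fun p : ℝ => log (p ^ n) / log p) (𝓝[>] 0) (𝓝 n) :=
  tendsto_log_div_log_of_eq_pow_mul n one_pos tendsto_const_nhds
    (Eventually.of_forall fun _ => (mul_one _).symm)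

lemma tendsto_half_mul_log_add_log_div_log {f₁ f₂ f₃ : ℝ → ℝ} {a b c : ℝ} (hc : c ≠ 0)
    (h₁ : Tendsto (fun p => log (f₁ p) / log p) (𝓝[>] 0) (𝓝 a))
    (h₂ : Tendsto (fun p => log (f₂ p) / log p) (𝓝[>] 0) (𝓝 b))
    (h₃ : Tendsto (fun p => log (f₃ p) / log p) (𝓝[>] 0) (𝓝 c)) :
    Tendsto (fun p => 1 / 2 * ((log (f₁ p) + log (f₂ p)) / log (f₃ p))) (𝓝[>] 0)
      (𝓝 (1 / 2 * ((a + b) / c))) := by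
  refine (((h₁.add h₂).div h₃ hc).const_mul (1 / 2)).congr' ?_
  filter_upwards [Ioo_mem_nhdsGT one_pos] with p hp
  simp only [Pi.div_apply]
  rw [← add_div, div_div_div_cancel_right₀ (log_neg hp.1 hp.2).ne]

lemma tendsto_fragility_chain :
    Tendsto (fun p : ℝ => (2 * p ^ 2 - p ^ 3 + p ^ 2) / (3 * p ^ 2 - 2 * p ^ 3))
      (𝓝[>] 0) (𝓝 1) := by
  have hlim : Tendsto (fun p : ℝ => (3 - p) / (3 - 2 * p)) (𝓝[>] 0)
      (𝓝 ((3 - 0) / (3 - 2 * 0))) :=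
    ((tendsto_const_nhds.sub tendsto_id).div
      (tendsto_const_nhds.sub (tendsto_id.const_mul 2)) (by norm_num)).mono_left
      nhdsWithin_le_nhds
  norm_num at hlim
  refine hlim.congr' ?_
  filter_upwards [self_mem_nhdsWithin] with p (hp : 0 < p)
  rw [show 2 * p ^ 2 - p ^ 3 + p ^ 2 = p ^ 2 * (3 - p) by ring,
    show 3 * p ^ 2 - 2 * p ^ 3 = p ^ 2 * (3 - 2 * p) by ring,
    mul_div_mul_left _ _ (by positivity)]

lemma tendsto_eta_chain :
    Tendsto (fun p : ℝ => 1 / 2 * ((log (p ^ 3) + log (p ^ 2)) / log (p ^ 4)))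
      (𝓝[>] 0) (𝓝 (5 / 8)) := by
  convert tendsto_half_mul_log_add_log_div_log (by norm_num) (tendsto_log_pow_div_log 3)
    (tendsto_log_pow_div_log 2) (tendsto_log_pow_div_log 4) using 2
  norm_num

lemma tendsto_eta_partition_chain :
    Tendsto (fun p : ℝ => 1 / 2 * ((log (2 * p ^ 2 - p ^ 3) + log (p ^ 2)) / log (p ^ 3)))
      (𝓝[>] 0) (𝓝 (2 / 3)) := by
  have h₁ : Tendsto (fun p : ℝ => log (2 * p ^ 2 - p ^ 3) / log p) (𝓝[>] 0) (𝓝 (2 : ℕ)) := by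
    refine tendsto_log_div_log_of_eq_pow_mul 2 two_pos (g := fun p => 2 - p) ?_
      (Eventually.of_forall fun _ => by ring)
    simpa using
      (tendsto_const_nhds.sub tendsto_id).mono_left (nhdsWithin_le_nhds (a := (0 : ℝ)))
  convert tendsto_half_mul_log_add_log_div_log (by norm_num) h₁
    (tendsto_log_pow_div_log 2) (tendsto_log_pow_div_log 3) using 2
  norm_num

end TailRatios

/-- For `X₁ = V₁∧V₂`, `X₂ = V₂∧V₃`, `X₃ = V₃∧V₄` with `V₁,...,V₄` i.i.d. unit
Pareto and the partition `I₁ = {1,2}`, `I₂ = {3}`: the fragility index equals 1,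
while `η(X,𝒟) = 5/8` and `η_{(I₁,I₂)} = 2/3`. -/
theorem pareto_min_fragility_and_eta
    {Ω : Type*} [MeasurableSpace Ω] (μ : Measure Ω) [IsProbabilityMeasure μ]
    (V : Fin 4 → Ω → ℝ) (hmeas : ∀ i, Measurable (V i))
    (hindep : iIndepFun V μ)
    (hsurv : ∀ i, ∀ x : ℝ, 1 ≤ x → μ {ω | x < V i ω} = ENNReal.ofReal x⁻¹)
    (X₁ X₂ X₃ : Ω → ℝ)
    (hX₁ : X₁ = fun ω => min (V 0 ω) (V 1 ω))
    (hX₂ : X₂ = fun ω => min (V 1 ω) (V 2 ω))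
    (hX₃ : X₃ = fun ω => min (V 2 ω) (V 3 ω)) :
    Tendsto (fun x : ℝ =>
        ((μ {ω | x < X₁ ω ∨ x < X₂ ω}).toReal + (μ {ω | x < X₃ ω}).toReal) /
          (μ {ω | x < X₁ ω ∨ x < X₂ ω ∨ x < X₃ ω}).toReal)
      atTop (𝓝 1) ∧
    Tendsto (fun x : ℝ =>
        (1 / 2) * ((Real.log (μ {ω | x < X₁ ω ∧ x < X₂ ω}).toReal +
            Real.log (μ {ω | x < X₃ ω}).toReal) /
          Real.log (μ {ω | x < X₁ ω ∧ x < X₂ ω ∧ x < X₃ ω}).toReal))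
      atTop (𝓝 (5 / 8)) ∧
    Tendsto (fun x : ℝ =>
        (1 / 2) * ((Real.log (μ {ω | x < X₁ ω ∨ x < X₂ ω}).toReal +
            Real.log (μ {ω | x < X₃ ω}).toReal) /
          Real.log (μ {ω | (x < X₁ ω ∨ x < X₂ ω) ∧ x < X₃ ω}).toReal))
      atTop (𝓝 (2 / 3)) := by
  subst hX₁ hX₂ hX₃
  have htail : ∀ᶠ x in atTop, ∀ i, μ.real {ω | x < V i ω} = x⁻¹ := by
    filter_upwards [eventually_ge_atTop 1] with x hx i
    rw [measureReal_def, hsurv i x hx, ENNReal.toReal_ofReal (inv_nonneg.2 (by linarith))]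
  simp only [← measureReal_def]
  refine ⟨(tendsto_fragility_chain.comp tendsto_inv_atTop_nhdsGT_zero).congr' ?_,
    (tendsto_eta_chain.comp tendsto_inv_atTop_nhdsGT_zero).congr' ?_,
    (tendsto_eta_partition_chain.comp tendsto_inv_atTop_nhdsGT_zero).congr' ?_⟩ <;>
  filter_upwards [htail] with x hx <;>
  simp only [Function.comp_apply, measureReal_chain_or hmeas hindep hx,
    measureReal_lt_min hindep hx (show (2 : Fin 4) ≠ 3 by decide),
    measureReal_chain_or_or hmeas hindep hx, measureReal_chain_and hindep hx,
    measureReal_chain_and_and hindep hx, measureReal_chain_or_and hindep hx]
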